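/- arXiv:1904.04801 — 3 statements merged into one kernel-verified Lean document; each statement's English description precedes it below -/
import Mathlib

section
/- Let h : ℝ → ℝ be continuously differentiable and suppose h'(t) ≥ -γ(h(t)) for all t ≥ t₀, where γ is a locally Lipschitz extended class-K function (strictly increasing with γ(0) = 0). If h(t₀) ≥ 0, then h(t) ≥ 0 for all t ≥ t₀. -/
open Set

theorem nonneg_of_deriv_nonneg_of_neg {f : ℝ → ℝ} {a b : ℝ} (hab : a ≤ b)
    (hf : ContinuousOn f (Icc a b)) (hdf : DifferentiableOn ℝ f (Ioo a b))
    (hderiv : ∀ x ∈ Ioo a b, f x < 0 → 0 ≤ deriv f x) (ha : 0 ≤ f a) : 0 ≤ f b := by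
  by_contra! hb
  -- `s` is the last time in `[a, b]` at which `f` is nonnegative.
  obtain ⟨s, ⟨⟨hs, hsb⟩, hfs⟩, hs_max⟩ : ∃ s, IsGreatest (Icc a b ∩ f ⁻¹' Ici 0) s :=
    (isCompact_Icc.of_isClosed_subset (hf.preimage_isClosed_of_isClosed isClosed_Icc isClosed_Ici)
      inter_subset_left).exists_isGreatest ⟨a, ⟨left_mem_Icc.2 hab, ha⟩⟩
  have hneg : ∀ x ∈ Ioo s b, f x < 0 := fun x hx ↦
    not_le.1 fun hfx ↦ hx.1.not_ge (hs_max ⟨⟨hs.trans hx.1.le, hx.2.le⟩, hfx⟩)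
  have hsub : Ioo s b ⊆ Ioo a b := Ioo_subset_Ioo_left hs
  have hmono : MonotoneOn f (Icc s b) := by
    refine monotoneOn_of_deriv_nonneg (convex_Icc s b) (hf.mono (Icc_subset_Icc_left hs)) ?_ ?_
    · simpa only [interior_Icc] using hdf.mono hsub
    · simp only [interior_Icc]
      exact fun x hx ↦ hderiv x (hsub hx) (hneg x hx)
  have : f s ≤ f b := hmono ⟨le_rfl, hsb⟩ ⟨hsb, le_rfl⟩ hsb
  linarith [show (0 : ℝ) ≤ f s from hfs]


theorem stmt_5_general (h : ℝ → ℝ) (hC1 : ContDiff ℝ 1 h)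
    (γ : ℝ → ℝ) (hγmono : StrictMono γ) (hγ0 : γ 0 = 0)
    (t₀ : ℝ) (hineq : ∀ t, t₀ ≤ t → deriv h t ≥ -γ (h t))
    (h0 : 0 ≤ h t₀) :
    ∀ t, t₀ ≤ t → 0 ≤ h t := by
  intro t ht
  refine nonneg_of_deriv_nonneg_of_neg ht hC1.continuous.continuousOn
    (hC1.differentiable one_ne_zero).differentiableOn (fun x hx hneg ↦ ?_) h0
  have : γ (h x) < 0 := hγ0 ▸ hγmono hneg
  linarith [hineq x hx.1.le]

/-- Comparison lemma / forward invariance of `{h ≥ 0}` for a zeroing barrier function. -/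
theorem stmt_5 (h : ℝ → ℝ) (hC1 : ContDiff ℝ 1 h)
    (γ : ℝ → ℝ) (hγlip : LocallyLipschitz γ) (hγmono : StrictMono γ) (hγ0 : γ 0 = 0)
    (t₀ : ℝ) (hineq : ∀ t, t₀ ≤ t → deriv h t ≥ -γ (h t))
    (h0 : 0 ≤ h t₀) :
    ∀ t, t₀ ≤ t → 0 ≤ h t :=
  stmt_5_general h hC1 γ hγmono hγ0 t₀ hineq h0
end

section
/- Let h : ℝ → ℝ be differentiable with h'(t) ≥ -γ(h(t)) where γ is Lipschitz on compacts, strictly increasing, and γ(0)=0. If h(t₀) < 0, then h is nondecreasing as long as it stays negative; in particular h(t) ≥ h(t₀) for all t ≥ t₀. -/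
/-- Asymptotic stability side of the zeroing barrier function property. -/
theorem stmt_6 (h : ℝ → ℝ) (hdiff : Differentiable ℝ h)
    (γ : ℝ → ℝ) (hγlip : LocallyLipschitz γ) (hγmono : StrictMono γ) (hγ0 : γ 0 = 0)
    (t₀ : ℝ) (hineq : ∀ t, deriv h t ≥ -γ (h t))
    (h0 : h t₀ < 0) :
    ∀ t, t₀ ≤ t → h t₀ ≤ h t := by
  intro t₁ ht₀t₁
  by_contra hlt
  push_neg at hlt
  -- set of times in [t₀,t₁] where h is still ≥ h t₀
  set S : Set ℝ := Set.Icc t₀ t₁ ∩ h ⁻¹' (Set.Ici (h t₀)) with hS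
  have hScl : IsClosed S :=
    isClosed_Icc.inter ((isClosed_Ici).preimage hdiff.continuous)
  have hScompact : IsCompact S :=
    (isCompact_Icc).inter_right ((isClosed_Ici).preimage hdiff.continuous)
  have hSne : S.Nonempty := ⟨t₀, ⟨le_refl _, ht₀t₁⟩, Set.mem_preimage.mpr Set.self_mem_Ici⟩
  obtain ⟨s, hsS⟩ : ∃ s ∈ S, ∀ x ∈ S, x ≤ s := hScompact.exists_isGreatest hSne |>.imp
    (fun s hs => ⟨hs.1, fun x hx => hs.2 hx⟩)
  obtain ⟨⟨⟨hts, hst₁⟩, hhs⟩, hsmax⟩ := hsS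
  have hhs' : h t₀ ≤ h s := hhs
  have hst₁' : s < t₁ := lt_of_le_of_ne hst₁ (by rintro rfl; exact absurd hhs' (not_le.mpr hlt))
  -- on (s, t₁], h < h t₀
  have hbelow : ∀ t ∈ Set.Ioc s t₁, h t < h t₀ := by
    intro t ⟨hst, htt₁⟩
    by_contra hge
    push_neg at hge
    have : t ∈ S := ⟨⟨le_trans hts hst.le, htt₁⟩, hge⟩
    exact absurd (hsmax t this) (not_le.mpr hst)
  -- deriv h > 0 on (s, t₁)
  have hderiv : ∀ t ∈ interior (Set.Icc s t₁), 0 < deriv h t := by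
    rw [interior_Icc]
    intro t ⟨hst, htt₁⟩
    have hneg : h t < 0 := lt_trans (hbelow t ⟨hst, htt₁.le⟩) h0
    have : γ (h t) < 0 := by
      have := hγmono hneg
      rwa [hγ0] at this
    linarith [hineq t]
  have hmono : StrictMonoOn h (Set.Icc s t₁) :=
    strictMonoOn_of_deriv_pos (convex_Icc s t₁) hdiff.continuous.continuousOn hderiv
  have := hmono ⟨le_refl _, hst₁'.le⟩ ⟨hst₁'.le, le_refl _⟩ hst₁'
  have := hbelow t₁ ⟨hst₁', le_refl _⟩
  linarith
end

section
/- Let h(t) = ∫_{t₀}^t φ(τ) dτ for a continuous function φ : ℝ → ℝ, and suppose φ(t) + γ(h(t)) ≥ 0 for all t ≥ t₀, where γ is locally Lipschitz, strictly increasing, and γ(0) = 0. Then h(t) ≥ 0 for all t ≥ t₀. -/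
open intervalIntegral

/-- Integrated barrier-function invariance: if `h(t) = ∫_{t₀}^t φ` and
`φ(t) + γ(h(t)) ≥ 0` for all `t ≥ t₀`, then `h(t) ≥ 0` for all `t ≥ t₀`. -/
theorem stmt_12 (φ : ℝ → ℝ) (hφ : Continuous φ) (t₀ : ℝ)
    (h : ℝ → ℝ) (hdef : ∀ t, h t = ∫ τ in t₀..t, φ τ)
    (γ : ℝ → ℝ) (hγlip : LocallyLipschitz γ) (hγmono : StrictMono γ) (hγ0 : γ 0 = 0)
    (hineq : ∀ t, t₀ ≤ t → 0 ≤ φ t + γ (h t)) :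
    ∀ t, t₀ ≤ t → 0 ≤ h t := by
  have hcont : Continuous h := by
    have : Continuous fun t => ∫ τ in t₀..t, φ τ :=
      intervalIntegral.continuous_primitive (fun a b => hφ.intervalIntegrable a b) t₀
    exact this.congr fun t => (hdef t).symm
  have h0 : h t₀ = 0 := by simp [hdef t₀]
  intro t₁ ht₁
  by_contra hneg
  push_neg at hneg
  -- set of zeros of h in [t₀, t₁]
  set S : Set ℝ := Set.Icc t₀ t₁ ∩ h ⁻¹' {0} with hS
  have hSne : S.Nonempty := ⟨t₀, ⟨le_refl _, ht₁⟩, h0⟩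
  have hSbdd : BddAbove S := ⟨t₁, fun x hx => hx.1.2⟩
  have hSclosed : IsClosed S :=
    (isClosed_Icc).inter (isClosed_singleton.preimage hcont)
  set s := sSup S with hs
  have hsS : s ∈ S := hSclosed.csSup_mem hSne hSbdd
  have hs0 : h s = 0 := hsS.2
  have hst₀ : t₀ ≤ s := hsS.1.1
  have hst₁ : s ≤ t₁ := hsS.1.2
  -- h < 0 on (s, t₁]
  have hhneg : ∀ t, s < t → t ≤ t₁ → h t < 0 := by
    intro t hst htt₁
    rcases lt_trichotomy (h t) 0 with hlt | heq | hgt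
    · exact hlt
    · exact absurd (le_csSup hSbdd ⟨⟨hst₀.trans hst.le, htt₁⟩, heq⟩) (not_le.mpr hst)
    · -- IVT between t and t₁
      obtain ⟨c, hc, hc0⟩ := intermediate_value_Icc' htt₁ (hcont.continuousOn) 
        ⟨hneg.le, hgt.le⟩
      exact absurd (le_csSup hSbdd ⟨⟨hst₀.trans (hst.le.trans hc.1), hc.2⟩, hc0⟩)
        (not_le.mpr (lt_of_lt_of_le hst hc.1))
  -- φ ≥ 0 on [s, t₁]
  have hφnn : ∀ t ∈ Set.Icc s t₁, 0 ≤ φ t := by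
    intro t ⟨hst, htt₁⟩
    have ht₀t : t₀ ≤ t := hst₀.trans hst
    rcases eq_or_lt_of_le hst with heq | hlt
    · have := hineq t ht₀t
      rw [← heq, hs0, hγ0] at this; rw [heq] at this
      linarith
    · have hneg' : h t < 0 := hhneg t hlt htt₁
      have : γ (h t) < 0 := by
        have := hγmono hneg'
        rwa [hγ0] at this
      have := hineq t ht₀t
      linarith
  -- conclude h t₁ ≥ h s = 0
  have key : h t₁ - h s = ∫ τ in s..t₁, φ τ := by
    rw [hdef t₁, hdef s]
    rw [← intervalIntegral.integral_interval_sub_left (hφ.intervalIntegrable t₀ t₁)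
      (hφ.intervalIntegrable t₀ s)]
  have hint : 0 ≤ ∫ τ in s..t₁, φ τ :=
    intervalIntegral.integral_nonneg hst₁ fun u hu => hφnn u hu
  rw [hs0] at key
  linarith
end
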